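/- arXiv:1509.04845 — 2 statements merged into one kernel-verified Lean document; each statement's English description precedes it below -/
import Mathlib

section
/- Let P > 0, N > 0 and 0 < γ ≤ 1. Then log₂(1 + (1+γ²)·P/N) ≥ (1/2)·log₂(1 + 2·P/N) + (1/2)·log₂(1 + 2·γ²·P/N), with equality if and only if γ = 1. -/
open Real

theorem stmt_1 (P N γ : ℝ) (hP : 0 < P) (hN : 0 < N) (hγ : 0 < γ) (hγ1 : γ ≤ 1) :
    Real.logb 2 (1 + (1 + γ ^ 2) * P / N)
      ≥ (1 / 2) * Real.logb 2 (1 + 2 * P / N) + (1 / 2) * Real.logb 2 (1 + 2 * γ ^ 2 * P / N) ∧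
    (Real.logb 2 (1 + (1 + γ ^ 2) * P / N)
      = (1 / 2) * Real.logb 2 (1 + 2 * P / N) + (1 / 2) * Real.logb 2 (1 + 2 * γ ^ 2 * P / N)
      ↔ γ = 1) := by
  have hx : 0 < P / N := div_pos hP hN
  have ha : (0:ℝ) < 1 + (1 + γ ^ 2) * P / N := by positivity
  have hb : (0:ℝ) < 1 + 2 * P / N := by positivity
  have hc : (0:ℝ) < 1 + 2 * γ ^ 2 * P / N := by positivity
  set a := 1 + (1 + γ ^ 2) * P / N with ha_def
  set b := 1 + 2 * P / N with hb_def
  set c := 1 + 2 * γ ^ 2 * P / N with hc_def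
  clear_value a b c
  have key : a ^ 2 - b * c = ((1 - γ ^ 2) * (P / N)) ^ 2 := by
    rw [ha_def, hb_def, hc_def]
    field_simp
    ring
  have hkey : b * c ≤ a ^ 2 := by nlinarith [sq_nonneg ((1 - γ ^ 2) * (P / N))]
  have hlog2 : Real.logb 2 (a ^ 2) = 2 * Real.logb 2 a := by
    rw [Real.logb_pow]; push_cast; ring
  have hlogmul : Real.logb 2 (b * c) = Real.logb 2 b + Real.logb 2 c :=
    Real.logb_mul (ne_of_gt hb) (ne_of_gt hc)
  have hmono : Real.logb 2 (b * c) ≤ Real.logb 2 (a ^ 2) :=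
    Real.logb_le_logb_of_le one_lt_two (mul_pos hb hc) hkey
  constructor
  · rw [hlog2, hlogmul] at hmono
    linarith
  · constructor
    · intro h
      by_contra hne
      have hγlt : γ < 1 := lt_of_le_of_ne hγ1 hne
      have hγ2lt : γ ^ 2 < 1 := by nlinarith
      have hsq : 0 < ((1 - γ ^ 2) * (P / N)) ^ 2 := by
        have h1 : 0 < 1 - γ ^ 2 := by linarith
        positivity
      have hstrict : b * c < a ^ 2 := by linarith
      have hlt : Real.logb 2 (b * c) < Real.logb 2 (a ^ 2) :=
        Real.logb_lt_logb one_lt_two (mul_pos hb hc) hstrict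
      rw [hlog2, hlogmul] at hlt
      linarith
    · intro h
      subst h
      have hab : a = b := by rw [ha_def, hb_def]; norm_num
      have hcb : c = b := by rw [hc_def, hb_def]; norm_num
      rw [hab, hcb]; ring
end

section
/- Let P > 0, N > 0 and 0 < γ ≤ 1. Define I_J = log₂(1+(1+γ²)P/N), I_{J,p} = min(I_J, 2·log₂(1+γ²·P/N)) and I_{FDM,p} = log₂(1+2γ²·P/N). Then I_{J,p} ≥ I_{FDM,p}. -/
open Real

theorem stmt_2 (P N γ : ℝ) (hP : 0 < P) (hN : 0 < N) (hγ : 0 < γ) (hγ1 : γ ≤ 1) :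
    min (Real.logb 2 (1 + (1 + γ ^ 2) * P / N)) (2 * Real.logb 2 (1 + γ ^ 2 * P / N))
      ≥ Real.logb 2 (1 + 2 * γ ^ 2 * P / N) := by
  have hx : 0 < γ ^ 2 * P / N := by positivity
  have hγ2 : γ ^ 2 ≤ 1 := by nlinarith
  have h2 : (0:ℝ) < 1 + 2 * γ ^ 2 * P / N := by positivity
  refine le_min ?_ ?_
  · apply (Real.logb_le_logb one_lt_two h2 (by positivity)).mpr
    have h1 : 2 * γ ^ 2 * P / N ≤ (1 + γ ^ 2) * P / N := by
      gcongr ?_ / N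
      nlinarith
    linarith
  · rw [show (2:ℝ) * Real.logb 2 (1 + γ ^ 2 * P / N)
        = Real.logb 2 ((1 + γ ^ 2 * P / N) ^ 2) by
      rw [Real.logb_pow]; ring]
    apply (Real.logb_le_logb one_lt_two h2 (by positivity)).mpr
    have := sq_nonneg (γ ^ 2 * P / N)
    ring_nf
    ring_nf at this
    nlinarith
end
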